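/- arXiv:2502.00534 — 3 statements merged into one kernel-verified Lean document; each statement's English description precedes it below -/
import Mathlib

section
/- Let X ∈ ℝ^{m×p}, W ∈ ℝ^{m×q}, L*, S*, L̂, Ŝ ∈ ℝ^{p×q}, and Y = X(L* + S*) + W. Write Δ_L = L̂ − L* and Δ_S = Ŝ − S*. Assume: (i) ‖Y − X(L̂ + Ŝ)‖_F² ≤ ‖Y − X(L* + S*)‖_F² (optimality of (L̂, Ŝ)); (ii) rank(Δ_L) ≤ 2r; (iii) ‖Δ_S‖_0 ≤ 2s. Then ‖X(Δ_L + Δ_S)‖_F² ≤ 2√(2r)·‖XᵀW‖_op·‖Δ_L‖_F + 2√(2s)·‖XᵀW‖_max·‖Δ_S‖_F. -/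
open Matrix BigOperators

/-- Frobenius norm of a real matrix. -/
noncomputable def frobNorm {p q : ℕ} (M : Matrix (Fin p) (Fin q) ℝ) : ℝ :=
  Real.sqrt (∑ i, ∑ j, (M i j) ^ 2)

/-- ℓ2 operator norm (largest singular value) of a real matrix. -/
noncomputable def opNorm {p q : ℕ} (M : Matrix (Fin p) (Fin q) ℝ) : ℝ :=
  ‖LinearMap.toContinuousLinearMap (Matrix.toEuclideanLin M)‖

/-- Maximum absolute entry of a real matrix. -/
noncomputable def maxNorm {p q : ℕ} (M : Matrix (Fin p) (Fin q) ℝ) : ℝ :=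
  ⨆ i, ⨆ j, |M i j|

/-- Number of nonzero entries of a matrix (the "ℓ0 norm"). -/
noncomputable def sparsity {p q : ℕ} (M : Matrix (Fin p) (Fin q) ℝ) : ℕ :=
  {ij : Fin p × Fin q | M ij.1 ij.2 ≠ 0}.ncard

/-- Euclidean norm of a vector. -/
noncomputable def e2norm {n : ℕ} (v : Fin n → ℝ) : ℝ :=
  Real.sqrt (∑ i, (v i) ^ 2)

/-- Supremum norm of a vector. -/
noncomputable def supNorm {n : ℕ} (v : Fin n → ℝ) : ℝ :=
  ⨆ i, |v i|

/-- The statement that every eigenvalue of the symmetric matrix `A` is at least `κ`,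
expressed through the quadratic form: `vᵀ A v ≥ κ ‖v‖₂²` for every `v`. -/
def minEigBound {n : ℕ} (A : Matrix (Fin n) (Fin n) ℝ) (κ : ℝ) : Prop :=
  ∀ v : Fin n → ℝ, κ * (v ⬝ᵥ v) ≤ v ⬝ᵥ (A *ᵥ v)

/-! Expanding the squares, optimality of `(L̂, Ŝ)` says
`‖XΔ‖_F² ≤ 2⟨W, XΔ⟩ = 2⟨XᵀW, Δ_L⟩ + 2⟨XᵀW, Δ_S⟩` for `Δ = Δ_L + Δ_S`. Both terms are bounded
by a duality inequality `⟨A, B⟩ ≤ √k ‖A‖ ‖B‖_F`: if `B` has `k` nonzero entries, pair entrywise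
and use `|A_ij| ≤ ‖A‖_max`; if `B` has rank `k`, pair along an eigenbasis `(u_i)` of `BBᵀ`, where
`‖Bᵀu_i‖²` is the `i`-th eigenvalue, so only `k` of the terms `⟨Aᵀu_i, Bᵀu_i⟩ ≤ ‖A‖_op ‖Bᵀu_i‖`
survive. In both cases Cauchy–Schwarz over the `k` surviving terms gives the factor `√k`. -/

open Finset

noncomputable def frobInner {p q : ℕ} (A B : Matrix (Fin p) (Fin q) ℝ) : ℝ :=
  ∑ i, ∑ j, A i j * B i j

section Norms

variable {n p q : ℕ}

lemma frobNorm_nonneg (M : Matrix (Fin p) (Fin q) ℝ) : 0 ≤ frobNorm M :=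
  Real.sqrt_nonneg _

lemma frobNorm_sq (M : Matrix (Fin p) (Fin q) ℝ) : frobNorm M ^ 2 = ∑ i, ∑ j, M i j ^ 2 :=
  Real.sq_sqrt (by positivity)

lemma frobNorm_sq_eq_frobInner (M : Matrix (Fin p) (Fin q) ℝ) : frobNorm M ^ 2 = frobInner M M := by
  rw [frobNorm_sq]
  simp only [frobInner, sq]

lemma e2norm_nonneg (v : Fin n → ℝ) : 0 ≤ e2norm v :=
  Real.sqrt_nonneg _

lemma e2norm_sq (v : Fin n → ℝ) : e2norm v ^ 2 = v ⬝ᵥ v := by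
  rw [e2norm, Real.sq_sqrt (by positivity)]
  simp only [dotProduct, sq]

lemma dotProduct_le_e2norm_mul (v w : Fin n → ℝ) : v ⬝ᵥ w ≤ e2norm v * e2norm w :=
  Real.sum_mul_le_sqrt_mul_sqrt _ v w

lemma e2norm_eq_norm_toLp (v : Fin n → ℝ) : e2norm v = ‖WithLp.toLp 2 v‖ := by
  simp [e2norm, EuclideanSpace.norm_eq]

lemma opNorm_nonneg (A : Matrix (Fin p) (Fin q) ℝ) : 0 ≤ opNorm A :=
  norm_nonneg _

lemma e2norm_mulVec_le (A : Matrix (Fin p) (Fin q) ℝ) (v : Fin q → ℝ) :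
    e2norm (A *ᵥ v) ≤ opNorm A * e2norm v := by
  rw [e2norm_eq_norm_toLp, e2norm_eq_norm_toLp]
  exact (LinearMap.toContinuousLinearMap (Matrix.toEuclideanLin A)).le_opNorm (WithLp.toLp 2 v)

lemma le_maxNorm (A : Matrix (Fin p) (Fin q) ℝ) (i : Fin p) (j : Fin q) : |A i j| ≤ maxNorm A :=
  (le_ciSup (Set.finite_range _).bddAbove j).trans
    (le_ciSup (f := fun i => ⨆ j, |A i j|) (Set.finite_range _).bddAbove i)

lemma maxNorm_nonneg (A : Matrix (Fin p) (Fin q) ℝ) : 0 ≤ maxNorm A :=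
  Real.iSup_nonneg fun _ => Real.iSup_nonneg fun _ => abs_nonneg _

end Norms

section FrobInner

variable {m p q : ℕ}

lemma frobInner_eq_trace (A B : Matrix (Fin p) (Fin q) ℝ) : frobInner A B = (A * Bᵀ).trace := by
  simp [frobInner, Matrix.trace, Matrix.mul_apply]

lemma frobInner_add_right (A B C : Matrix (Fin p) (Fin q) ℝ) :
    frobInner A (B + C) = frobInner A B + frobInner A C := by
  simp only [frobInner, Matrix.add_apply, mul_add, sum_add_distrib]

lemma frobInner_mul_right (X : Matrix (Fin m) (Fin p) ℝ) (W : Matrix (Fin m) (Fin q) ℝ)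
    (D : Matrix (Fin p) (Fin q) ℝ) : frobInner W (X * D) = frobInner (Xᵀ * W) D := by
  rw [frobInner_eq_trace, frobInner_eq_trace, Matrix.transpose_mul, ← Matrix.mul_assoc,
    Matrix.trace_mul_cycle]

lemma frobNorm_sub_sq (W M : Matrix (Fin p) (Fin q) ℝ) :
    frobNorm (W - M) ^ 2 = frobNorm W ^ 2 - 2 * frobInner W M + frobNorm M ^ 2 := by
  simp only [frobNorm_sq, frobInner, Matrix.sub_apply, sub_sq, sum_add_distrib,
    sum_sub_distrib, mul_sum, mul_assoc]

lemma frobNorm_sq_le_two_frobInner {W M : Matrix (Fin p) (Fin q) ℝ}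
    (h : frobNorm (W - M) ^ 2 ≤ frobNorm W ^ 2) : frobNorm M ^ 2 ≤ 2 * frobInner W M := by
  rw [frobNorm_sub_sq] at h
  linarith

end FrobInner

lemma sum_le_sqrt_card_mul_sqrt_sum_sq {ι : Type*} [Fintype ι] {x n : ι → ℝ} {M : ℝ}
    (hM : 0 ≤ M) (hx : ∀ k, x k ≤ M * n k) :
    ∑ k, x k ≤ √(#{k | n k ≠ 0} : ℕ) * M * √(∑ k, n k ^ 2) := by
  have hcs : ∑ k with n k ≠ 0, n k ≤ √(#{k | n k ≠ 0} : ℕ) * √(∑ k with n k ≠ 0, n k ^ 2) := by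
    simpa using Real.sum_mul_le_sqrt_mul_sqrt {k | n k ≠ 0} 1 n
  have hsub : ∑ k with n k ≠ 0, n k ^ 2 ≤ ∑ k, n k ^ 2 :=
    sum_le_univ_sum_of_nonneg fun k => sq_nonneg _
  calc ∑ k, x k ≤ M * ∑ k with n k ≠ 0, n k := by
        rw [sum_filter_ne_zero, mul_sum]
        exact sum_le_sum fun k _ => hx k
    _ ≤ M * (√(#{k | n k ≠ 0} : ℕ) * √(∑ k, n k ^ 2)) := by
        gcongr
        exact hcs.trans (by gcongr)
    _ = √(#{k | n k ≠ 0} : ℕ) * M * √(∑ k, n k ^ 2) := by ring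

section Duality

variable {p q : ℕ}

lemma frobInner_eq_sum_of_mul_transpose_eq_one {U : Matrix (Fin p) (Fin p) ℝ} (hU : U * Uᵀ = 1)
    (A B : Matrix (Fin p) (Fin q) ℝ) :
    frobInner A B = ∑ k, (Aᵀ *ᵥ Uᵀ k) ⬝ᵥ (Bᵀ *ᵥ Uᵀ k) := by
  calc frobInner A B = frobInner (Uᵀ * A) (Uᵀ * B) := by
        rw [frobInner_eq_trace, frobInner_eq_trace, Matrix.transpose_mul,
          Matrix.transpose_transpose, Matrix.trace_mul_comm (Uᵀ * A), Matrix.mul_assoc,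
          ← Matrix.mul_assoc U, hU, Matrix.one_mul, Matrix.trace_mul_comm]
    _ = ∑ k, (Aᵀ *ᵥ Uᵀ k) ⬝ᵥ (Bᵀ *ᵥ Uᵀ k) := by
        simp [frobInner, dotProduct, Matrix.mul_apply, Matrix.mulVec, mul_comm]

lemma transpose_mulVec_dotProduct_le (A : Matrix (Fin p) (Fin q) ℝ) (u : Fin p → ℝ)
    (v : Fin q → ℝ) : (Aᵀ *ᵥ u) ⬝ᵥ v ≤ e2norm u * (opNorm A * e2norm v) := by
  rw [Matrix.mulVec_transpose, ← Matrix.dotProduct_mulVec]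
  exact (dotProduct_le_e2norm_mul u (A *ᵥ v)).trans
    (mul_le_mul_of_nonneg_left (e2norm_mulVec_le A v) (e2norm_nonneg u))

lemma e2norm_transpose_mulVec_sq (B : Matrix (Fin p) (Fin q) ℝ) (u : Fin p → ℝ) :
    e2norm (Bᵀ *ᵥ u) ^ 2 = u ⬝ᵥ ((B * Bᵀ) *ᵥ u) := by
  rw [e2norm_sq, Matrix.mulVec_transpose, ← Matrix.dotProduct_mulVec, ← Matrix.mulVec_transpose,
    Matrix.mulVec_mulVec]

lemma frobInner_le_sqrt_rank_mul (A B : Matrix (Fin p) (Fin q) ℝ) :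
    frobInner A B ≤ √B.rank * opNorm A * frobNorm B := by
  have hG : (B * Bᵀ).IsHermitian := by
    simpa using Matrix.isHermitian_mul_conjTranspose_self B
  set U : Matrix (Fin p) (Fin p) ℝ := (hG.eigenvectorUnitary : Matrix (Fin p) (Fin p) ℝ)
  have hU : U * Uᵀ = 1 := by
    simpa [Matrix.star_eq_conjTranspose] using
      Matrix.mem_unitaryGroup_iff.mp hG.eigenvectorUnitary.2
  have hu : ∀ k, e2norm (Uᵀ k) = 1 := fun k => by
    simp [U, e2norm_eq_norm_toLp, hG.eigenvectorBasis.orthonormal.1 k]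
  set c : Fin p → Fin q → ℝ := fun k => Bᵀ *ᵥ Uᵀ k
  have hc : ∀ k, e2norm (c k) ^ 2 = hG.eigenvalues k := fun k => by
    have hUk : Uᵀ k = ⇑(hG.eigenvectorBasis k) := rfl
    rw [e2norm_transpose_mulVec_sq, hUk, hG.mulVec_eigenvectorBasis, dotProduct_smul, ← hUk,
      ← e2norm_sq, hu, one_pow, smul_eq_mul, mul_one]
  have hcard : #{k | e2norm (c k) ≠ 0} = B.rank := by
    rw [← Matrix.rank_self_mul_transpose, hG.rank_eq_card_non_zero_eigs, Fintype.card_subtype]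
    simp only [← hc, ne_eq, sq_eq_zero_iff]
  have hsq : ∑ k, e2norm (c k) ^ 2 = frobNorm B ^ 2 := by
    simp only [e2norm_sq, frobNorm_sq_eq_frobInner,
      frobInner_eq_sum_of_mul_transpose_eq_one hU B B, c]
  calc frobInner A B = ∑ k, (Aᵀ *ᵥ Uᵀ k) ⬝ᵥ c k :=
        frobInner_eq_sum_of_mul_transpose_eq_one hU A B
    _ ≤ √(#{k | e2norm (c k) ≠ 0} : ℕ) * opNorm A * √(∑ k, e2norm (c k) ^ 2) := by
        refine sum_le_sqrt_card_mul_sqrt_sum_sq (opNorm_nonneg A) fun k => ?_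
        simpa [hu k] using transpose_mulVec_dotProduct_le A (Uᵀ k) (c k)
    _ = √B.rank * opNorm A * frobNorm B := by
        rw [hcard, hsq, Real.sqrt_sq (frobNorm_nonneg B)]

lemma frobInner_le_sqrt_sparsity_mul (A S : Matrix (Fin p) (Fin q) ℝ) :
    frobInner A S ≤ √(sparsity S) * maxNorm A * frobNorm S := by
  have hcard : #{ij : Fin p × Fin q | |S ij.1 ij.2| ≠ 0} = sparsity S := by
    rw [sparsity, ← Set.ncard_coe_finset]
    simp
  have hsq : ∑ ij : Fin p × Fin q, |S ij.1 ij.2| ^ 2 = frobNorm S ^ 2 := by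
    rw [frobNorm_sq, ← Fintype.sum_prod_type']
    simp only [sq_abs]
  calc frobInner A S = ∑ ij : Fin p × Fin q, A ij.1 ij.2 * S ij.1 ij.2 :=
        (Fintype.sum_prod_type' _).symm
    _ ≤ √(#{ij : Fin p × Fin q | |S ij.1 ij.2| ≠ 0} : ℕ) * maxNorm A *
          √(∑ ij : Fin p × Fin q, |S ij.1 ij.2| ^ 2) := by
        refine sum_le_sqrt_card_mul_sqrt_sum_sq (maxNorm_nonneg A) fun ij => ?_
        calc A ij.1 ij.2 * S ij.1 ij.2 ≤ |A ij.1 ij.2| * |S ij.1 ij.2| := by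
              rw [← abs_mul]; exact le_abs_self _
          _ ≤ maxNorm A * |S ij.1 ij.2| := by gcongr; exact le_maxNorm A _ _
    _ = √(sparsity S) * maxNorm A * frobNorm S := by
        rw [hcard, hsq, Real.sqrt_sq (frobNorm_nonneg S)]

end Duality

/-- Basic inequality from the optimality condition of the constrained
least-squares program: if `(L̂, Ŝ)` beats `(L*, S*)` in squared loss, `rank(Δ_L) ≤ 2r`
and `‖Δ_S‖₀ ≤ 2s`, then
`‖X(Δ_L+Δ_S)‖_F² ≤ 2√(2r)‖XᵀW‖_op‖Δ_L‖_F + 2√(2s)‖XᵀW‖_max‖Δ_S‖_F`. -/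
theorem basic_inequality {m p q : ℕ}
    (X : Matrix (Fin m) (Fin p) ℝ) (W : Matrix (Fin m) (Fin q) ℝ)
    (Lstar Sstar Lhat Shat : Matrix (Fin p) (Fin q) ℝ)
    (Y : Matrix (Fin m) (Fin q) ℝ)
    (hY : Y = X * (Lstar + Sstar) + W)
    (r s : ℕ)
    (hopt : frobNorm (Y - X * (Lhat + Shat)) ^ 2 ≤
      frobNorm (Y - X * (Lstar + Sstar)) ^ 2)
    (hrank : (Lhat - Lstar).rank ≤ 2 * r)
    (hsparse : sparsity (Shat - Sstar) ≤ 2 * s) :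
    frobNorm (X * ((Lhat - Lstar) + (Shat - Sstar))) ^ 2 ≤
      2 * Real.sqrt (2 * r) * opNorm (Xᵀ * W) * frobNorm (Lhat - Lstar)
      + 2 * Real.sqrt (2 * s) * maxNorm (Xᵀ * W) * frobNorm (Shat - Sstar) := by
  have hresid_star : Y - X * (Lstar + Sstar) = W := by
    rw [hY]; abel
  have hresid_hat : Y - X * (Lhat + Shat) = W - X * ((Lhat - Lstar) + (Shat - Sstar)) := by
    rw [hY]; simp only [Matrix.mul_add, Matrix.mul_sub]; abel
  have hbasic := frobNorm_sq_le_two_frobInner (hresid_hat ▸ hresid_star ▸ hopt)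
  rw [frobInner_mul_right, frobInner_add_right] at hbasic
  have hL : frobInner (Xᵀ * W) (Lhat - Lstar) ≤
      √(2 * r) * opNorm (Xᵀ * W) * frobNorm (Lhat - Lstar) := by
    refine (frobInner_le_sqrt_rank_mul _ _).trans ?_
    gcongr
    · exact frobNorm_nonneg _
    · exact opNorm_nonneg _
    · exact_mod_cast hrank
  have hS : frobInner (Xᵀ * W) (Shat - Sstar) ≤
      √(2 * s) * maxNorm (Xᵀ * W) * frobNorm (Shat - Sstar) := by
    refine (frobInner_le_sqrt_sparsity_mul _ _).trans ?_
    gcongr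
    · exact frobNorm_nonneg _
    · exact maxNorm_nonneg _
    · exact_mod_cast hsparse
  linarith
end

section
/- Let S and A be finite nonempty sets, H ≥ 1 an integer, r : S×A → [0,1] a reward function, φ : S×A → ℝ^p and ψ : S → ℝ^q feature maps, and M* ∈ ℝ^{p×q} such that for every (s,a) ∈ S×A: φ(s,a)ᵀ M* ψ(s') ≥ 0 for all s' ∈ S and Σ_{s'∈S} φ(s,a)ᵀ M* ψ(s') = 1. Define the optimal value functions backwards: V*_{H+1} ≡ 0, and for h = H,…,1: Q*_h(s,a) = r(s,a) + Σ_{s'} φ(s,a)ᵀ M* ψ(s') · V*_{h+1}(s') and V*_h(s) = max_{a} Q*_h(s,a). Let B ⊆ ℝ^{p×q} × ℝ^{p×q} be a nonempty bounded set containing a pair (L₀, S₀) with L₀ + S₀ = M*, and define the optimistic value functions backwards: V_{H+1} ≡ 0, and for h = H,…,1: Q_h(s,a) = r(s,a) + sup_{(L,S)∈B} Σ_{s'} φ(s,a)ᵀ (L+S) ψ(s') · V_{h+1}(s') and V_h(s) = min( H, max( 0, max_a Q_h(s,a) ) ). Then for every h ∈ {1,…,H} and every (s,a) ∈ S×A,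 Q_h(s,a) ≥ Q*_h(s,a). -/
open Matrix

/-!
Backward induction on the stage. If `V*_{h+1} ≤ V_{h+1}`, then at the pair `(L₀, S₀) ∈ B` with
`L₀ + S₀ = M*` the optimistic backup already dominates the true backup, because the true
transition weights are nonnegative; the supremum over `B` can only be larger, and it is a genuine
supremum because the backup is linear in `L + S` and `B` is bounded. This gives `Q*_h ≤ Q_h`.
Passing to `V*_h ≤ V_h` also needs the truncation at `H` to be harmless, which holds since rewards
are at most `1` and the transition weights sum to `1`, so `V*_h ≤ H + 1 - h`.
-/

theorem le_ciSup₂_of_mem {α β : Type*} [ConditionallyCompleteLattice α] {f : β → α} {s : Set β}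
    (H : BddAbove (f '' s)) {c : β} (hc : c ∈ s) : f c ≤ ⨆ i ∈ s, f i :=
  le_ciSup₂ (f := fun i (_ : i ∈ s) => f i)
    (H.mono <| Set.iUnion_subset fun _ => Set.range_subset_iff.2 (Set.mem_image_of_mem f)) c hc

theorem abs_dotProduct_mulVec_le {m n : Type*} [Fintype m] [Fintype n] (x : m → ℝ)
    {N : Matrix m n ℝ} (y : n → ℝ) {R : ℝ} (hN : ∀ i j, |N i j| ≤ R) :
    |x ⬝ᵥ (N *ᵥ y)| ≤ R * ∑ i, ∑ j, |x i| * |y j| := by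
  have hexpand : x ⬝ᵥ (N *ᵥ y) = ∑ i, ∑ j, x i * (N i j * y j) := by
    simp only [dotProduct, mulVec, Finset.mul_sum]
  rw [hexpand, Finset.mul_sum]
  refine (Finset.abs_sum_le_sum_abs _ _).trans (Finset.sum_le_sum fun i _ => ?_)
  rw [Finset.mul_sum]
  refine (Finset.abs_sum_le_sum_abs _ _).trans (Finset.sum_le_sum fun j _ => ?_)
  rw [abs_mul, abs_mul]
  calc |x i| * (|N i j| * |y j|) = |N i j| * (|x i| * |y j|) := by ring
    _ ≤ R * (|x i| * |y j|) := by gcongr; exact hN i j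

theorem bddAbove_image_sum_dotProduct_add_mulVec {m n σ : Type*} [Fintype m] [Fintype n]
    [Fintype σ] {B : Set (Matrix m n ℝ × Matrix m n ℝ)}
    (hB : ∃ R : ℝ, ∀ LS ∈ B, (∀ i j, |LS.1 i j| ≤ R) ∧ (∀ i j, |LS.2 i j| ≤ R))
    (x : m → ℝ) (y : σ → n → ℝ) (v : σ → ℝ) :
    BddAbove ((fun LS : Matrix m n ℝ × Matrix m n ℝ =>
      ∑ s, x ⬝ᵥ ((LS.1 + LS.2) *ᵥ y s) * v s) '' B) := by
  obtain ⟨R, hR⟩ := hB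
  refine ⟨∑ s, (R + R) * (∑ i, ∑ j, |x i| * |y s j|) * |v s|, ?_⟩
  rintro _ ⟨LS, hLS, rfl⟩
  have hentry : ∀ i j, |(LS.1 + LS.2) i j| ≤ R + R := fun i j =>
    (abs_add_le _ _).trans (add_le_add ((hR LS hLS).1 i j) ((hR LS hLS).2 i j))
  refine Finset.sum_le_sum fun s _ => ?_
  calc x ⬝ᵥ ((LS.1 + LS.2) *ᵥ y s) * v s ≤ |x ⬝ᵥ ((LS.1 + LS.2) *ᵥ y s)| * |v s| := by
        rw [← abs_mul]; exact le_abs_self _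
    _ ≤ _ := by gcongr; exact abs_dotProduct_mulVec_le x (y s) hentry

theorem sum_mul_le_ciSup₂_sum_mul {σ Θ : Type*} [Fintype σ] {p : σ → ℝ} (hp : ∀ s, 0 ≤ p s)
    {P : Θ → σ → ℝ} {B : Set Θ} {θ₀ : Θ} (hθ₀ : θ₀ ∈ B) (hPθ₀ : P θ₀ = p) {w v : σ → ℝ}
    (hB : BddAbove ((fun θ => ∑ s, P θ s * v s) '' B)) (hwv : ∀ s, w s ≤ v s) :
    ∑ s, p s * w s ≤ ⨆ θ ∈ B, ∑ s, P θ s * v s :=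
  calc ∑ s, p s * w s ≤ ∑ s, P θ₀ s * v s := by
        rw [hPθ₀]; exact Finset.sum_le_sum fun s _ => mul_le_mul_of_nonneg_left (hwv s) (hp s)
    _ ≤ ⨆ θ ∈ B, ∑ s, P θ s * v s := le_ciSup₂_of_mem hB hθ₀

theorem optimalValue_le_horizon_sub {S A : Type*} [Fintype S] [Nonempty A] (H : ℕ)
    (r : S → A → ℝ) (hr : ∀ s a, r s a ≤ 1) (P : S → A → S → ℝ)
    (hpos : ∀ s a s', 0 ≤ P s a s') (hsum : ∀ s a, ∑ s', P s a s' = 1)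
    (Qstar : ℕ → S → A → ℝ) (Vstar : ℕ → S → ℝ) (hVstarTop : ∀ s, Vstar (H + 1) s = 0)
    (hQstar : ∀ h ∈ Finset.Icc 1 H, ∀ s a,
      Qstar h s a = r s a + ∑ s', P s a s' * Vstar (h + 1) s')
    (hVstar : ∀ h ∈ Finset.Icc 1 H, ∀ s, Vstar h s = ⨆ a, Qstar h s a)
    {h : ℕ} (hh : h ∈ Finset.Icc 1 (H + 1)) : ∀ s, Vstar h s ≤ H + 1 - h := by
  obtain ⟨h_pos, h_le⟩ := Finset.mem_Icc.1 hh
  refine Nat.decreasingInduction' (fun k hk hhk ih s => ?_) h_le (by simp [hVstarTop])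
  have hkH : k ∈ Finset.Icc 1 H := Finset.mem_Icc.2 ⟨h_pos.trans hhk, Nat.lt_succ_iff.1 hk⟩
  rw [hVstar k hkH]
  refine ciSup_le fun a => ?_
  have hnext : ∑ s', P s a s' * Vstar (k + 1) s' ≤ H - k :=
    calc ∑ s', P s a s' * Vstar (k + 1) s' ≤ ∑ s', P s a s' * (H - k) :=
          Finset.sum_le_sum fun s' _ => mul_le_mul_of_nonneg_left
            ((ih s').trans_eq (by push_cast; ring)) (hpos s a s')
      _ = H - k := by rw [← Finset.sum_mul, hsum, one_mul]
  rw [hQstar k hkH]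
  linarith [hr s a]

theorem optimalValue_le_optimisticValue {S A : Type*} [Finite A] (H : ℕ)
    (Qstar : ℕ → S → A → ℝ) (Vstar : ℕ → S → ℝ) (Q : ℕ → S → A → ℝ) (V : ℕ → S → ℝ)
    (hVstarTop : ∀ s, Vstar (H + 1) s = 0) (hVTop : ∀ s, V (H + 1) s = 0)
    (hVstar : ∀ h ∈ Finset.Icc 1 H, ∀ s, Vstar h s = ⨆ a, Qstar h s a)
    (hV : ∀ h ∈ Finset.Icc 1 H, ∀ s, V h s = min (H : ℝ) (max 0 (⨆ a, Q h s a)))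
    (hVstar_le : ∀ h ∈ Finset.Icc 1 H, ∀ s, Vstar h s ≤ H)
    (hstep : ∀ h ∈ Finset.Icc 1 H,
      (∀ s, Vstar (h + 1) s ≤ V (h + 1) s) → ∀ s a, Qstar h s a ≤ Q h s a)
    {h : ℕ} (hh : h ∈ Finset.Icc 1 (H + 1)) : ∀ s, Vstar h s ≤ V h s := by
  obtain ⟨h_pos, h_le⟩ := Finset.mem_Icc.1 hh
  refine Nat.decreasingInduction' (fun k hk hhk ih s => ?_) h_le (by simp [hVstarTop, hVTop])
  have hkH : k ∈ Finset.Icc 1 H := Finset.mem_Icc.2 ⟨h_pos.trans hhk, Nat.lt_succ_iff.1 hk⟩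
  rw [hV k hkH]
  refine le_min (hVstar_le k hkH s) (le_max_of_le_right ?_)
  rw [hVstar k hkH]
  exact ciSup_mono (Set.finite_range _).bddAbove (hstep k hkH ih s)

theorem ucb_optimism_general {S A : Type*} [Fintype S] [Fintype A] [Nonempty A]
    {p q : ℕ} (H : ℕ)
    (r : S → A → ℝ) (hr : ∀ s a, r s a ∈ Set.Icc (0 : ℝ) 1)
    (φ : S → A → (Fin p → ℝ)) (ψ : S → (Fin q → ℝ))
    (M : Matrix (Fin p) (Fin q) ℝ)
    (hpos : ∀ s a s', 0 ≤ φ s a ⬝ᵥ (M *ᵥ ψ s'))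
    (hsum : ∀ s a, ∑ s', φ s a ⬝ᵥ (M *ᵥ ψ s') = 1)
    (B : Set (Matrix (Fin p) (Fin q) ℝ × Matrix (Fin p) (Fin q) ℝ))
    (hBbdd : ∃ R : ℝ, ∀ LS ∈ B, (∀ i j, |LS.1 i j| ≤ R) ∧ (∀ i j, |LS.2 i j| ≤ R))
    (hBmem : ∃ L₀ S₀, (L₀, S₀) ∈ B ∧ L₀ + S₀ = M)
    (Qstar : ℕ → S → A → ℝ) (Vstar : ℕ → S → ℝ)
    (Q : ℕ → S → A → ℝ) (V : ℕ → S → ℝ)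
    (hVstarTop : ∀ s, Vstar (H + 1) s = 0)
    (hQstar : ∀ h ∈ Finset.Icc 1 H, ∀ s a,
      Qstar h s a = r s a + ∑ s', (φ s a ⬝ᵥ (M *ᵥ ψ s')) * Vstar (h + 1) s')
    (hVstar : ∀ h ∈ Finset.Icc 1 H, ∀ s, Vstar h s = ⨆ a, Qstar h s a)
    (hVTop : ∀ s, V (H + 1) s = 0)
    (hQ : ∀ h ∈ Finset.Icc 1 H, ∀ s a,
      Q h s a = r s a +
        ⨆ LS ∈ B, ∑ s', (φ s a ⬝ᵥ ((LS.1 + LS.2) *ᵥ ψ s')) * V (h + 1) s')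
    (hV : ∀ h ∈ Finset.Icc 1 H, ∀ s,
      V h s = min (H : ℝ) (max 0 (⨆ a, Q h s a))) :
    ∀ h ∈ Finset.Icc 1 H, ∀ s a, Qstar h s a ≤ Q h s a := by
  obtain ⟨L₀, S₀, hmem, rfl⟩ := hBmem
  have hstep : ∀ h ∈ Finset.Icc 1 H,
      (∀ s, Vstar (h + 1) s ≤ V (h + 1) s) → ∀ s a, Qstar h s a ≤ Q h s a := by
    intro h hh hv s a
    rw [hQstar h hh, hQ h hh]
    exact add_le_add le_rfl (sum_mul_le_ciSup₂_sum_mul (hpos s a) hmem rfl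
      (bddAbove_image_sum_dotProduct_add_mulVec hBbdd _ _ _) hv)
  have hVstar_le : ∀ h ∈ Finset.Icc 1 H, ∀ s, Vstar h s ≤ H := fun h hh s => by
    have hbound := optimalValue_le_horizon_sub H r (fun s a => (hr s a).2) _ hpos hsum Qstar
      Vstar hVstarTop hQstar hVstar (Finset.Icc_subset_Icc_right H.le_succ hh) s
    linarith [(Nat.one_le_cast (α := ℝ)).2 (Finset.mem_Icc.1 hh).1]
  intro h hh
  have hnext : h + 1 ∈ Finset.Icc 1 (H + 1) := by simp only [Finset.mem_Icc] at hh ⊢; omega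
  exact hstep h hh (optimalValue_le_optimisticValue H Qstar Vstar Q V hVstarTop hVTop hVstar hV
    hVstar_le hstep hnext)

/-- Optimism (UCB) lemma for UCB-Q learning under composite MDPs: if the
confidence region `B` is bounded and contains a pair `(L₀, S₀)` with `L₀ + S₀ = M*`, then
the optimistic action-value functions dominate the optimal ones at every stage `h ∈ [1,H]`
and every state-action pair. -/
theorem ucb_optimism {S A : Type*} [Fintype S] [Fintype A] [Nonempty S] [Nonempty A]
    {p q : ℕ} (H : ℕ) (hH : 1 ≤ H)
    (r : S → A → ℝ) (hr : ∀ s a, r s a ∈ Set.Icc (0 : ℝ) 1)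
    (φ : S → A → (Fin p → ℝ)) (ψ : S → (Fin q → ℝ))
    (M : Matrix (Fin p) (Fin q) ℝ)
    (hpos : ∀ s a s', 0 ≤ φ s a ⬝ᵥ (M *ᵥ ψ s'))
    (hsum : ∀ s a, ∑ s', φ s a ⬝ᵥ (M *ᵥ ψ s') = 1)
    (B : Set (Matrix (Fin p) (Fin q) ℝ × Matrix (Fin p) (Fin q) ℝ))
    (hBbdd : ∃ R : ℝ, ∀ LS ∈ B, (∀ i j, |LS.1 i j| ≤ R) ∧ (∀ i j, |LS.2 i j| ≤ R))
    (hBmem : ∃ L₀ S₀, (L₀, S₀) ∈ B ∧ L₀ + S₀ = M)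
    (Qstar : ℕ → S → A → ℝ) (Vstar : ℕ → S → ℝ)
    (Q : ℕ → S → A → ℝ) (V : ℕ → S → ℝ)
    (hVstarTop : ∀ s, Vstar (H + 1) s = 0)
    (hQstar : ∀ h ∈ Finset.Icc 1 H, ∀ s a,
      Qstar h s a = r s a + ∑ s', (φ s a ⬝ᵥ (M *ᵥ ψ s')) * Vstar (h + 1) s')
    (hVstar : ∀ h ∈ Finset.Icc 1 H, ∀ s, Vstar h s = ⨆ a, Qstar h s a)
    (hVTop : ∀ s, V (H + 1) s = 0)
    (hQ : ∀ h ∈ Finset.Icc 1 H, ∀ s a,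
      Q h s a = r s a +
        ⨆ LS ∈ B, ∑ s', (φ s a ⬝ᵥ ((LS.1 + LS.2) *ᵥ ψ s')) * V (h + 1) s')
    (hV : ∀ h ∈ Finset.Icc 1 H, ∀ s,
      V h s = min (H : ℝ) (max 0 (⨆ a, Q h s a))) :
    ∀ h ∈ Finset.Icc 1 H, ∀ s a, Qstar h s a ≤ Q h s a :=
  ucb_optimism_general H r hr φ ψ M hpos hsum B hBbdd hBmem Qstar Vstar Q V hVstarTop hQstar hVstar
    hVTop hQ hV
end

section
/- Let D ∈ ℝ^{p×q} have at most m nonzero entries (‖D‖_0 ≤ m), and let u ∈ ℝ^p, v ∈ ℝ^q. Then |uᵀ D v| ≤ √m · ‖u‖_∞ · ‖D‖_F · ‖v‖₂. -/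
open Matrix BigOperators

/-- Cauchy–Schwarz for nonnegative functions on a finset, square-root form. -/
lemma cs_sqrt {ι : Type*} (s : Finset ι) (f g : ι → ℝ)
    (hf : ∀ i ∈ s, 0 ≤ f i) (hg : ∀ i ∈ s, 0 ≤ g i) :
    ∑ i ∈ s, f i * g i ≤ Real.sqrt (∑ i ∈ s, f i ^ 2) * Real.sqrt (∑ i ∈ s, g i ^ 2) := by
  have h := Finset.sum_mul_sq_le_sq_mul_sq s f g
  have hnn : 0 ≤ ∑ i ∈ s, f i * g i :=
    Finset.sum_nonneg fun i hi => mul_nonneg (hf i hi) (hg i hi)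
  calc ∑ i ∈ s, f i * g i = Real.sqrt ((∑ i ∈ s, f i * g i) ^ 2) := (Real.sqrt_sq hnn).symm
    _ ≤ Real.sqrt ((∑ i ∈ s, f i ^ 2) * ∑ i ∈ s, g i ^ 2) := Real.sqrt_le_sqrt h
    _ = _ := Real.sqrt_mul (Finset.sum_nonneg fun i _ => sq_nonneg _) _

/-- Sparse quadratic-form bound: if `D` has at most `m` nonzero entries,
then `|uᵀ D v| ≤ √m ‖u‖_∞ ‖D‖_F ‖v‖₂`. -/
theorem sparse_quadratic_form_bound {p q : ℕ}
    (D : Matrix (Fin p) (Fin q) ℝ) (m : ℕ) (hD : sparsity D ≤ m)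
    (u : Fin p → ℝ) (v : Fin q → ℝ) :
    |u ⬝ᵥ (D *ᵥ v)| ≤ Real.sqrt m * supNorm u * frobNorm D * e2norm v := by
  classical
  set S : Finset (Fin p) := Finset.univ.filter (fun i => ∃ j, D i j ≠ 0) with hS
  set T : Finset (Fin p × Fin q) := Finset.univ.filter (fun ij => D ij.1 ij.2 ≠ 0) with hT
  have hTcard : sparsity D = T.card := by
    unfold sparsity
    rw [← Set.ncard_coe_finset]
    congr 1
    ext ij
    simp [hT]
  have hScard : S.card ≤ m := by
    refine le_trans ?_ (hTcard ▸ hD)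
    calc S.card ≤ (T.image Prod.fst).card := Finset.card_le_card (by
            intro i hi
            simp only [hS, Finset.mem_filter, Finset.mem_univ, true_and] at hi
            obtain ⟨j, hj⟩ := hi
            exact Finset.mem_image.2 ⟨(i, j), by simp [hT, hj], rfl⟩)
      _ ≤ T.card := Finset.card_image_le
  have hsup : 0 ≤ supNorm u := Real.iSup_nonneg (fun i => abs_nonneg _)
  have hv : 0 ≤ e2norm v := Real.sqrt_nonneg _
  have hF : 0 ≤ frobNorm D := Real.sqrt_nonneg _
  have hui : ∀ i, |u i| ≤ supNorm u := fun i =>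
    le_ciSup (f := fun i => |u i|) (Set.Finite.bddAbove (Set.finite_range _)) i
  have hrow0 : ∀ i ∉ S, (D *ᵥ v) i = 0 := by
    intro i hi
    simp only [hS, Finset.mem_filter, Finset.mem_univ, true_and, not_exists, not_not] at hi
    simp [Matrix.mulVec, dotProduct, hi]
  have hrownn : ∀ i, (0:ℝ) ≤ e2norm (D i) := fun i => Real.sqrt_nonneg _
  -- per-row Cauchy–Schwarz
  have hrowCS : ∀ i, |(D *ᵥ v) i| ≤ e2norm (D i) * e2norm v := by
    intro i
    have h1 : |(D *ᵥ v) i| ≤ ∑ j, |D i j| * |v j| := by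
      simp only [Matrix.mulVec, dotProduct]
      calc |∑ j, D i j * v j| ≤ ∑ j, |D i j * v j| := Finset.abs_sum_le_sum_abs _ _
        _ = ∑ j, |D i j| * |v j| := by simp [abs_mul]
    refine h1.trans ?_
    have h2 := cs_sqrt Finset.univ (fun j => |D i j|) (fun j => |v j|)
      (fun j _ => abs_nonneg _) (fun j _ => abs_nonneg _)
    simpa [e2norm, sq_abs] using h2
  -- main chain
  have hmain : |u ⬝ᵥ (D *ᵥ v)| ≤ supNorm u * ∑ i ∈ S, e2norm (D i) * e2norm v := by
    calc |u ⬝ᵥ (D *ᵥ v)| = |∑ i ∈ S, u i * (D *ᵥ v) i| := by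
          rw [dotProduct]
          congr 1
          refine (Finset.sum_subset (Finset.subset_univ S) ?_).symm
          intro i _ hi
          simp [hrow0 i hi]
      _ ≤ ∑ i ∈ S, |u i * (D *ᵥ v) i| := Finset.abs_sum_le_sum_abs _ _
      _ = ∑ i ∈ S, |u i| * |(D *ᵥ v) i| := by simp [abs_mul]
      _ ≤ ∑ i ∈ S, supNorm u * (e2norm (D i) * e2norm v) := by
          refine Finset.sum_le_sum fun i _ => ?_
          exact mul_le_mul (hui i) (hrowCS i) (abs_nonneg _) hsup
      _ = supNorm u * ∑ i ∈ S, e2norm (D i) * e2norm v := by rw [Finset.mul_sum]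
  refine hmain.trans ?_
  -- second Cauchy–Schwarz: ∑_{i∈S} e2norm (D i) ≤ √|S| * frobNorm D
  have hCS2 : ∑ i ∈ S, e2norm (D i) ≤ Real.sqrt S.card * frobNorm D := by
    have h := cs_sqrt S (fun _ => (1:ℝ)) (fun i => e2norm (D i))
      (fun _ _ => zero_le_one) (fun i _ => hrownn i)
    have hsq : ∀ i, e2norm (D i) ^ 2 = ∑ j, D i j ^ 2 := fun i =>
      Real.sq_sqrt (Finset.sum_nonneg fun j _ => sq_nonneg _)
    have hle : ∑ i ∈ S, e2norm (D i) ^ 2 ≤ ∑ i, ∑ j, D i j ^ 2 := by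
      calc ∑ i ∈ S, e2norm (D i) ^ 2 = ∑ i ∈ S, ∑ j, D i j ^ 2 := by simp [hsq]
        _ ≤ ∑ i, ∑ j, D i j ^ 2 := Finset.sum_le_sum_of_subset_of_nonneg
            (Finset.subset_univ S)
            (fun i _ _ => Finset.sum_nonneg fun j _ => sq_nonneg _)
    calc ∑ i ∈ S, e2norm (D i) = ∑ i ∈ S, 1 * e2norm (D i) := by simp
      _ ≤ Real.sqrt (∑ i ∈ S, 1 ^ 2) * Real.sqrt (∑ i ∈ S, e2norm (D i) ^ 2) := h
      _ ≤ Real.sqrt S.card * frobNorm D := by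
          refine mul_le_mul ?_ ?_ (Real.sqrt_nonneg _) (Real.sqrt_nonneg _)
          · simp
          · exact Real.sqrt_le_sqrt hle
  calc supNorm u * ∑ i ∈ S, e2norm (D i) * e2norm v
      = supNorm u * ((∑ i ∈ S, e2norm (D i)) * e2norm v) := by rw [← Finset.sum_mul]
    _ ≤ supNorm u * ((Real.sqrt S.card * frobNorm D) * e2norm v) := by
        refine mul_le_mul_of_nonneg_left ?_ hsup
        exact mul_le_mul_of_nonneg_right hCS2 hv
    _ ≤ supNorm u * ((Real.sqrt m * frobNorm D) * e2norm v) := by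
        refine mul_le_mul_of_nonneg_left ?_ hsup
        refine mul_le_mul_of_nonneg_right (mul_le_mul_of_nonneg_right ?_ hF) hv
        exact Real.sqrt_le_sqrt (by exact_mod_cast hScard)
    _ = Real.sqrt m * supNorm u * frobNorm D * e2norm v := by ring
end
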